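/- arXiv:2306.16824 — 5 statements merged into one kernel-verified Lean document; each statement's English description precedes it below -/
import Mathlib

section
/- Every point of the flexibility set P = {u ∈ ℝ^p : 0 ≤ u_t ≤ m, ∑_t u_t = E} lies in the convex hull of the set of permutations of the vector v = (m, ..., m, r, 0, ..., 0), where v has q = ⌊E/m⌋ entries equal to m, one entry equal to r = E − q·m, and the remaining entries equal to 0. -/
/-- The set of coordinate permutations of a vector `v : Fin p → ℝ`. -/
def permSet {p : ℕ} (v : Fin p → ℝ) : Set (Fin p → ℝ) :=
  {w | ∃ σ : Equiv.Perm (Fin p), w = v ∘ σ}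

open Finset in
/-- Base case: a point of P with at most one fractional coordinate is a
permutation of `v`. -/
lemma base_case (p : ℕ) (m E : ℝ)
    (hm : 0 < m) (hE0 : 0 ≤ E) (hE1 : E < p * m)
    (q : ℕ) (hq : q = ⌊E / m⌋₊) (r : ℝ) (hr : r = E - q * m)
    (v : Fin p → ℝ)
    (hv : v = fun i : Fin p => if (i : ℕ) < q then m else if (i : ℕ) = q then r else 0)
    (u : Fin p → ℝ) (hub : ∀ t, 0 ≤ u t ∧ u t ≤ m) (hsum : ∑ t, u t = E)
    (hcard : (univ.filter (fun t => 0 < u t ∧ u t < m)).card ≤ 1) :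
    u ∈ permSet v := by
  classical
  -- find special index i0
  have hex : ∃ i0 : Fin p, u i0 < m ∧ ∀ t, t ≠ i0 → u t = 0 ∨ u t = m := by
    rcases (univ.filter (fun t => 0 < u t ∧ u t < m)).eq_empty_or_nonempty with hF | ⟨i0, hi0⟩
    · have hall : ∀ t : Fin p, u t = 0 ∨ u t = m := by
        intro t
        have ht : t ∉ univ.filter (fun t => 0 < u t ∧ u t < m) := by rw [hF]; simp
        simp only [mem_filter, mem_univ, true_and, not_and, not_lt] at ht
        rcases lt_or_eq_of_le (hub t).1 with h0 | h0
        · exact Or.inr (le_antisymm (hub t).2 (ht h0))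
        · exact Or.inl h0.symm
      have hne : ∃ t0 : Fin p, u t0 ≠ m := by
        by_contra hno
        push_neg at hno
        have : ∑ t : Fin p, u t = p * m := by
          rw [Finset.sum_congr rfl (fun t _ => hno t)]
          simp [mul_comm]
        linarith [hsum ▸ this]
      obtain ⟨t0, ht0⟩ := hne
      exact ⟨t0, lt_of_le_of_ne (hub t0).2 ht0, fun t _ => hall t⟩
    · simp only [mem_filter, mem_univ, true_and] at hi0
      refine ⟨i0, hi0.2, fun t ht => ?_⟩
      by_contra hno
      push_neg at hno
      have h1 : 0 < u t := lt_of_le_of_ne (hub t).1 (Ne.symm hno.1)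
      have h2 : u t < m := lt_of_le_of_ne (hub t).2 hno.2
      have : t ∈ univ.filter (fun t => 0 < u t ∧ u t < m) := by
        simp [h1, h2]
      have hle := hcard
      have : (univ.filter (fun t => 0 < u t ∧ u t < m)).card ≥ 2 := by
        have hne : ({t, i0} : Finset (Fin p)) ⊆ univ.filter (fun t => 0 < u t ∧ u t < m) := by
          intro x hx
          simp only [Finset.mem_insert, Finset.mem_singleton] at hx
          rcases hx with rfl | rfl
          · simp [h1, h2]
          · simp [hi0.1, hi0.2]
        have := Finset.card_le_card hne
        rwa [Finset.card_insert_of_notMem (by simpa using ht), Finset.card_singleton] at this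
      omega
  obtain ⟨i0, hi0m, hi0⟩ := hex
  set A : Finset (Fin p) := univ.filter (fun t => u t = m) with hA
  have hi0A : i0 ∉ A := by
    simp only [hA, mem_filter, mem_univ, true_and]
    exact fun h => absurd h (ne_of_lt hi0m)
  -- sum decomposition
  have hsum' : E = A.card * m + u i0 := by
    have h1 : ∑ t, u t = ∑ t ∈ A, u t + ∑ t ∈ univ.filter (fun t => ¬ u t = m), u t := by
      rw [hA]
      exact (Finset.sum_filter_add_sum_filter_not univ _ u).symm
    have h2 : ∑ t ∈ A, u t = A.card * m := by
      rw [Finset.sum_congr rfl (fun t ht => by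
        simp only [hA, mem_filter] at ht; exact ht.2)]
      simp [mul_comm]
    have h3 : ∑ t ∈ univ.filter (fun t => ¬ u t = m), u t = u i0 := by
      apply Finset.sum_eq_single_of_mem
      · simp only [mem_filter, mem_univ, true_and]
        exact ne_of_lt hi0m
      · intro b hb hbne
        simp only [mem_filter, mem_univ, true_and] at hb
        rcases hi0 b hbne with h0 | h0
        · exact h0
        · exact absurd h0 hb
    rw [← hsum, h1, h2, h3]
  have hu0 : 0 ≤ u i0 := (hub i0).1
  -- q = A.card
  have hqA : q = A.card := by
    rw [hq]
    rw [Nat.floor_eq_iff (by positivity)]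
    constructor
    · rw [le_div_iff₀ hm]
      nlinarith
    · rw [div_lt_iff₀ hm]
      push_cast
      nlinarith
  have hrc : r = u i0 := by
    rw [hr, hqA]
    linarith
  have hqp : q < p := by
    rw [hq]
    rw [Nat.floor_lt (by positivity)]
    rw [div_lt_iff₀ hm]
    exact_mod_cast hE1
  -- build the permutation
  let eL : {x : Fin p // (x : ℕ) < q} ≃ Fin q :=
    { toFun := fun x => ⟨x.1, x.2⟩
      invFun := fun i => ⟨⟨(i : ℕ), lt_trans i.2 hqp⟩, i.2⟩
      left_inv := fun x => by ext; rfl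
      right_inv := fun i => by ext; rfl }
  have hcards : Fintype.card {x : Fin p // (x : ℕ) < q} = Fintype.card {x : Fin p // x ∈ A} := by
    rw [Fintype.card_congr eL, Fintype.card_fin]
    have : Fintype.card {x : Fin p // x ∈ A} = A.card := Fintype.card_coe A
    rw [this, ← hqA]
  let e1 : {x : Fin p // (x : ℕ) < q} ≃ {x : Fin p // x ∈ A} := Fintype.equivOfCardEq hcards
  let σ1 : Equiv.Perm (Fin p) := e1.extendSubtype
  have hσ1A : ∀ x : Fin p, (x : ℕ) < q → σ1 x ∈ A := fun x hx => e1.extendSubtype_mem x hx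
  have hσ1A' : ∀ x : Fin p, ¬ (x : ℕ) < q → σ1 x ∉ A := fun x hx => e1.extendSubtype_not_mem x hx
  let iq : Fin p := ⟨q, hqp⟩
  let j0 : Fin p := σ1 iq
  have hj0A : j0 ∉ A := hσ1A' iq (by simp [iq])
  let σ : Equiv.Perm (Fin p) := σ1.trans (Equiv.swap i0 j0)
  have key : ∀ t : Fin p, u (σ t) = v t := by
    intro t
    rcases lt_trichotomy (t : ℕ) q with ht | ht | ht
    · -- σ t ∈ A
      have h1 : σ1 t ∈ A := hσ1A t ht
      have h2 : σ1 t ≠ i0 := fun h => hi0A (h ▸ h1)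
      have h3 : σ1 t ≠ j0 := fun h => hj0A (h ▸ h1)
      have : σ t = σ1 t := by
        simp only [σ, Equiv.trans_apply]
        exact Equiv.swap_apply_of_ne_of_ne h2 h3
      rw [this]
      simp only [hA, mem_filter] at h1
      rw [h1.2, hv]
      simp [ht]
    · have htq : t = iq := by
        apply Fin.ext
        simpa using ht
      have : σ t = i0 := by
        simp only [σ, Equiv.trans_apply, htq]
        exact Equiv.swap_apply_right i0 j0
      rw [this, hv]
      simp only [htq]
      simp [iq, hrc, Nat.lt_irrefl]
    · have hnlt : ¬ (t : ℕ) < q := by omega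
      have h1 : σ1 t ∉ A := hσ1A' t hnlt
      have h2 : σ1 t ≠ j0 := by
        intro h
        have : t = iq := σ1.injective h
        rw [this] at ht
        simp [iq] at ht
      have hne_i0 : σ t ≠ i0 ∧ σ t ∉ A := by
        by_cases hc : σ1 t = i0
        · have hst : σ t = j0 := by
            simp only [σ, Equiv.trans_apply, hc]
            exact Equiv.swap_apply_left i0 j0
          constructor
          · rw [hst]
            intro h
            exact h2 (hc.trans h.symm)
          · rw [hst]; exact hj0A
        · have hst : σ t = σ1 t := by
            simp only [σ, Equiv.trans_apply]
            exact Equiv.swap_apply_of_ne_of_ne hc h2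
          exact ⟨hst ▸ hc, hst ▸ h1⟩
      have hu0' : u (σ t) = 0 := by
        rcases hi0 (σ t) hne_i0.1 with h0 | h0
        · exact h0
        · exfalso
          apply hne_i0.2
          simp [hA, h0]
      rw [hu0', hv]
      simp only
      rw [if_neg hnlt, if_neg (by omega)]
  exact ⟨σ⁻¹, by
    funext x
    have := key (σ⁻¹ x)
    simp only [Function.comp_apply]
    rw [← this]
    simp⟩

open Finset in
lemma induction_step (p : ℕ) (m E : ℝ)
    (hm : 0 < m) (hE0 : 0 ≤ E) (hE1 : E < p * m)
    (q : ℕ) (hq : q = ⌊E / m⌋₊) (r : ℝ) (hr : r = E - q * m)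
    (v : Fin p → ℝ)
    (hv : v = fun i : Fin p => if (i : ℕ) < q then m else if (i : ℕ) = q then r else 0) :
    ∀ N : ℕ, ∀ u : Fin p → ℝ, (∀ t, 0 ≤ u t ∧ u t ≤ m) → ∑ t, u t = E →
      (univ.filter (fun t => 0 < u t ∧ u t < m)).card ≤ N →
      u ∈ convexHull ℝ (permSet v) := by
  classical
  intro N
  induction N with
  | zero =>
    intro u hub hsum hcard
    exact subset_convexHull ℝ _
      (base_case p m E hm hE0 hE1 q hq r hr v hv u hub hsum (le_trans hcard (by omega)))
  | succ n ih =>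
    intro u hub hsum hcard
    by_cases hle : (univ.filter (fun t => 0 < u t ∧ u t < m)).card ≤ 1
    · exact subset_convexHull ℝ _ (base_case p m E hm hE0 hE1 q hq r hr v hv u hub hsum hle)
    · push_neg at hle
      obtain ⟨i, hi, j, hj, hij⟩ := Finset.one_lt_card.mp hle
      simp only [mem_filter, mem_univ, true_and] at hi hj
      set a : ℝ := min (m - u i) (u j) with ha_def
      set b : ℝ := min (u i) (m - u j) with hb_def
      have ha : 0 < a := lt_min (by linarith [hi.2]) hj.1
      have hb : 0 < b := lt_min hi.1 (by linarith [hj.2])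
      have ha1 : a ≤ m - u i := min_le_left _ _
      have ha2 : a ≤ u j := min_le_right _ _
      have hb1 : b ≤ u i := min_le_left _ _
      have hb2 : b ≤ m - u j := min_le_right _ _
      set d : Fin p → ℝ := fun t => (if t = i then (1:ℝ) else 0) - (if t = j then (1:ℝ) else 0)
        with hd_def
      have hdi : d i = 1 := by simp [hd_def, hij]
      have hdj : d j = -1 := by simp [hd_def, hij.symm]
      have hdo : ∀ t, t ≠ i → t ≠ j → d t = 0 := by intro t h1 h2; simp [hd_def, h1, h2]
      have hdsum : ∑ t, d t = 0 := by
        simp only [hd_def, Finset.sum_sub_distrib]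
        rw [Finset.sum_ite_eq' univ i (fun _ => (1:ℝ)), Finset.sum_ite_eq' univ j (fun _ => (1:ℝ))]
        simp
      set x : Fin p → ℝ := fun t => u t + a * d t with hx_def
      set y : Fin p → ℝ := fun t => u t - b * d t with hy_def
      -- bounds for x
      have hxb : ∀ t, 0 ≤ x t ∧ x t ≤ m := by
        intro t
        by_cases h1 : t = i
        · subst h1; simp only [hx_def, hdi, mul_one]; constructor <;> [linarith [hi.1]; linarith]
        by_cases h2 : t = j
        · subst h2; simp only [hx_def, hdj]; constructor <;> [linarith; linarith [hj.2]]
        · simp only [hx_def, hdo t h1 h2, mul_zero, add_zero]; exact hub t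
      have hyb : ∀ t, 0 ≤ y t ∧ y t ≤ m := by
        intro t
        by_cases h1 : t = i
        · subst h1; simp only [hy_def, hdi, mul_one]; constructor <;> [linarith; linarith [hi.2]]
        by_cases h2 : t = j
        · subst h2; simp only [hy_def, hdj]; constructor <;> [linarith [hj.1]; linarith]
        · simp only [hy_def, hdo t h1 h2, mul_zero, sub_zero]; exact hub t
      have hxsum : ∑ t, x t = E := by
        simp only [hx_def, Finset.sum_add_distrib, ← Finset.mul_sum, hdsum, mul_zero, add_zero,
          hsum]
      have hysum : ∑ t, y t = E := by
        simp only [hy_def, Finset.sum_sub_distrib, ← Finset.mul_sum, hdsum, mul_zero, sub_zero,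
          hsum]
      -- fractional sets shrink
      have hsubx : (univ.filter (fun t => 0 < x t ∧ x t < m)) ⊆
          (univ.filter (fun t => 0 < u t ∧ u t < m)) := by
        intro t ht
        simp only [mem_filter, mem_univ, true_and] at ht ⊢
        by_cases h1 : t = i
        · subst h1; exact hi
        by_cases h2 : t = j
        · subst h2; exact hj
        · simpa only [hx_def, hdo t h1 h2, mul_zero, add_zero] using ht
      have hsuby : (univ.filter (fun t => 0 < y t ∧ y t < m)) ⊆
          (univ.filter (fun t => 0 < u t ∧ u t < m)) := by
        intro t ht
        simp only [mem_filter, mem_univ, true_and] at ht ⊢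
        by_cases h1 : t = i
        · subst h1; exact hi
        by_cases h2 : t = j
        · subst h2; exact hj
        · simpa only [hy_def, hdo t h1 h2, mul_zero, sub_zero] using ht
      have hxcard : (univ.filter (fun t => 0 < x t ∧ x t < m)).card ≤ n := by
        have hstrict : ∃ t ∈ (univ.filter (fun t => 0 < u t ∧ u t < m)),
            t ∉ (univ.filter (fun t => 0 < x t ∧ x t < m)) := by
          rcases min_cases (m - u i) (u j) with ⟨hmin, _⟩ | ⟨hmin, _⟩
          · refine ⟨i, by simp [hi.1, hi.2], ?_⟩
            simp only [mem_filter, mem_univ, true_and, not_and, not_lt]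
            intro _
            simp only [hx_def, hdi, mul_one]
            rw [← ha_def] at hmin
            linarith
          · refine ⟨j, by simp [hj.1, hj.2], ?_⟩
            simp only [mem_filter, mem_univ, true_and, not_and, not_lt]
            intro hpos
            exfalso
            rw [← ha_def] at hmin
            simp only [hx_def, hdj] at hpos
            linarith
        obtain ⟨t, ht1, ht2⟩ := hstrict
        have : (univ.filter (fun t => 0 < x t ∧ x t < m)).card <
            (univ.filter (fun t => 0 < u t ∧ u t < m)).card :=
          Finset.card_lt_card (Finset.ssubset_iff_of_subset hsubx |>.mpr ⟨t, ht1, ht2⟩)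
        omega
      have hycard : (univ.filter (fun t => 0 < y t ∧ y t < m)).card ≤ n := by
        have hstrict : ∃ t ∈ (univ.filter (fun t => 0 < u t ∧ u t < m)),
            t ∉ (univ.filter (fun t => 0 < y t ∧ y t < m)) := by
          rcases min_cases (u i) (m - u j) with ⟨hmin, _⟩ | ⟨hmin, _⟩
          · refine ⟨i, by simp [hi.1, hi.2], ?_⟩
            simp only [mem_filter, mem_univ, true_and, not_and, not_lt]
            intro hpos
            exfalso
            rw [← hb_def] at hmin
            simp only [hy_def, hdi, mul_one] at hpos
            linarith
          · refine ⟨j, by simp [hj.1, hj.2], ?_⟩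
            simp only [mem_filter, mem_univ, true_and, not_and, not_lt]
            intro _
            simp only [hy_def, hdj]
            rw [← hb_def] at hmin
            linarith
        obtain ⟨t, ht1, ht2⟩ := hstrict
        have : (univ.filter (fun t => 0 < y t ∧ y t < m)).card <
            (univ.filter (fun t => 0 < u t ∧ u t < m)).card :=
          Finset.card_lt_card (Finset.ssubset_iff_of_subset hsuby |>.mpr ⟨t, ht1, ht2⟩)
        omega
      have hxmem : x ∈ convexHull ℝ (permSet v) := ih x hxb hxsum hxcard
      have hymem : y ∈ convexHull ℝ (permSet v) := ih y hyb hysum hycard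
      have hab : 0 < a + b := by linarith
      have hab' : a + b ≠ 0 := ne_of_gt hab
      have hcomb : u = (b / (a + b)) • x + (a / (a + b)) • y := by
        funext t
        simp only [Pi.add_apply, Pi.smul_apply, smul_eq_mul, hx_def, hy_def]
        field_simp
        ring
      rw [hcomb]
      exact (convex_convexHull ℝ (permSet v)) hxmem hymem
        (by positivity) (by positivity) (by field_simp; ring)


/-- Every point of the flexibility set lies in the convex hull of the
permutations of `v = (m,...,m,r,0,...,0)` with `q = ⌊E/m⌋` entries `m`,
one entry `r = E − q·m`, and the rest zero. -/
theorem flexibility_subset_permutahedron (p : ℕ) (m E : ℝ)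
    (hm : 0 < m) (hE0 : 0 ≤ E) (hE1 : E < p * m)
    (q : ℕ) (hq : q = ⌊E / m⌋₊) (r : ℝ) (hr : r = E - q * m)
    (v : Fin p → ℝ)
    (hv : v = fun i : Fin p => if (i : ℕ) < q then m else if (i : ℕ) = q then r else 0)
    (P : Set (Fin p → ℝ))
    (hP : P = {u | (∀ t, 0 ≤ u t ∧ u t ≤ m) ∧ ∑ t, u t = E}) :
    P ⊆ convexHull ℝ (permSet v) := by
  intro u hu
  rw [hP] at hu
  exact induction_step p m E hm hE0 hE1 q hq r hr v hv
    (Finset.univ.filter (fun t => 0 < u t ∧ u t < m)).card u hu.1 hu.2 le_rfl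
end

section
/- For any vectors x, y ∈ ℝ^p, the Minkowski sum of the permutahedra Π(x) and Π(y) equals the permutahedron Π(x + y), where x and y are taken in their (weakly) decreasing arrangements; that is, ConvexHull{x_π : π ∈ S_p} + ConvexHull{y_π : π ∈ S_p} = ConvexHull{(x+y)_π : π ∈ S_p}, provided x and y are both weakly decreasing. -/
open Pointwise

/-- The permutahedron of `v`: the convex hull of all coordinate permutations. -/
def permutahedron {p : ℕ} (v : Fin p → ℝ) : Set (Fin p → ℝ) :=
  convexHull ℝ {w | ∃ σ : Equiv.Perm (Fin p), w = v ∘ σ}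

/-!
Since convex hulls commute with Minkowski sums and `Π(x + y)` is invariant under permuting
coordinates, it suffices to show `x + y ∘ τ ∈ Π(x + y)` for every permutation `τ`.
Take a counterexample `τ` minimising `∑ i, i * (y ∘ τ) i`. Then `u = y ∘ τ ≠ y` is not
antitone, so `u k < u j` for some `k < j`. Swapping `k` and `j` lowers the potential, so
`x + u ∘ s ∈ Π(x + y)` for `s = swap k j`, hence also `(x + u ∘ s) ∘ s`; and since `x` is
antitone, `x + u` lies on the segment between these two points.
-/

section

variable {p : ℕ}

lemma perm_mem_permutahedron (v : Fin p → ℝ) (σ : Equiv.Perm (Fin p)) :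
    v ∘ σ ∈ permutahedron v :=
  subset_convexHull ℝ _ ⟨σ, rfl⟩

lemma comp_perm_mem_permutahedron {v w : Fin p → ℝ} (hw : w ∈ permutahedron v)
    (σ : Equiv.Perm (Fin p)) : w ∘ σ ∈ permutahedron v := by
  have hw' := Set.mem_image_of_mem (LinearMap.funLeft ℝ ℝ σ) hw
  rw [permutahedron, LinearMap.image_convexHull] at hw'
  refine convexHull_mono ?_ hw'
  rintro _ ⟨_, ⟨τ, rfl⟩, rfl⟩
  exact ⟨σ.trans τ, rfl⟩

lemma comp_perm_eq_self_of_antitone {y : Fin p → ℝ} {τ : Equiv.Perm (Fin p)}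
    (hy : Antitone y) (hyτ : Antitone (y ∘ τ)) : y ∘ τ = y :=
  Tuple.unique_antitone (τ := 1) hyτ hy

lemma sum_index_mul_comp_swap_lt (u : Fin p → ℝ) {k j : Fin p} (hkj : k < j)
    (hu : u k < u j) :
    ∑ i : Fin p, ((i : ℕ) : ℝ) * (u ∘ Equiv.swap k j) i < ∑ i : Fin p, ((i : ℕ) : ℝ) * u i := by
  have hreindex : ∑ i : Fin p, ((i : ℕ) : ℝ) * (u ∘ Equiv.swap k j) i =
      ∑ i : Fin p, ((Equiv.swap k j i : ℕ) : ℝ) * u i := by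
    simpa using Equiv.sum_comp (Equiv.swap k j) fun i => ((Equiv.swap k j i : ℕ) : ℝ) * u i
  have hdiff : ∑ i : Fin p, (((Equiv.swap k j i : ℕ) : ℝ) - (i : ℕ)) * u i =
      (((j : ℕ) : ℝ) - (k : ℕ)) * (u k - u j) := by
    rw [Fintype.sum_eq_add k j hkj.ne]
    · simp only [Equiv.swap_apply_left, Equiv.swap_apply_right]
      ring
    · rintro i ⟨hik, hij⟩
      simp [Equiv.swap_apply_of_ne_of_ne hik hij]
  have hkj' : ((k : ℕ) : ℝ) < (j : ℕ) := by exact_mod_cast hkj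
  simp only [sub_mul, Finset.sum_sub_distrib] at hdiff
  rw [hreindex]
  nlinarith

lemma mem_segment_comp_swap {v w : Fin p → ℝ} {k j : Fin p} (hkj : k ≠ j)
    (hk : w k ∈ segment ℝ (v k) (v j)) (hsum : w k + w j = v k + v j)
    (hrest : ∀ i, i ≠ k → i ≠ j → w i = v i) :
    w ∈ segment ℝ v (v ∘ Equiv.swap k j) := by
  obtain ⟨a, b, ha, hb, hab, hwk⟩ := hk
  refine ⟨a, b, ha, hb, hab, funext fun i => ?_⟩
  simp only [smul_eq_mul] at hwk
  simp only [Pi.add_apply, Pi.smul_apply, Function.comp_apply, smul_eq_mul]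
  by_cases hik : i = k
  · subst hik
    simpa using hwk
  by_cases hij : i = j
  · subst hij
    simp only [Equiv.swap_apply_right]
    linear_combination (v k + v i) * hab - hsum - hwk
  · rw [Equiv.swap_apply_of_ne_of_ne hik hij, hrest i hik hij]
    linear_combination (v i) * hab

lemma add_comp_perm_mem_permutahedron {x y : Fin p → ℝ} (hx : Antitone x) (hy : Antitone y)
    (τ : Equiv.Perm (Fin p)) : x + y ∘ τ ∈ permutahedron (x + y) := by
  classical
  by_contra hτ
  obtain ⟨τ, hτ, hmin⟩ := Finset.exists_min_image
    (Finset.univ.filter fun τ : Equiv.Perm (Fin p) => x + y ∘ τ ∉ permutahedron (x + y))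
    (fun τ => ∑ i : Fin p, ((i : ℕ) : ℝ) * (y ∘ τ) i) ⟨τ, by simpa using hτ⟩
  simp only [Finset.mem_filter, Finset.mem_univ, true_and] at hτ hmin
  set u := y ∘ τ
  have hu : ¬Antitone u := fun hu => hτ <| by
    rw [show u = y from comp_perm_eq_self_of_antitone hy hu]
    simpa using perm_mem_permutahedron (x + y) 1
  obtain ⟨k, j, hkj, hukj⟩ : ∃ k j, k < j ∧ u k < u j := by
    simpa [antitone_iff_forall_lt] using hu
  set s := Equiv.swap k j
  have hswap : x + u ∘ s ∈ permutahedron (x + y) := by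
    by_contra h
    exact (sum_index_mul_comp_swap_lt u hkj hukj).not_ge (hmin (τ * s) h)
  have hseg : x + u ∈ segment ℝ (x + u ∘ s) ((x + u ∘ s) ∘ s) := by
    refine mem_segment_comp_swap hkj.ne ?_ ?_ fun i hik hij => ?_
    · rw [segment_eq_uIcc]
      simp only [s, Pi.add_apply, Function.comp_apply, Equiv.swap_apply_left,
        Equiv.swap_apply_right]
      exact Set.mem_uIcc.2 (Or.inr ⟨by linarith [hx hkj.le], by linarith⟩)
    · simp only [s, Pi.add_apply, Function.comp_apply, Equiv.swap_apply_left,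
        Equiv.swap_apply_right]
      ring
    · simp [s, Equiv.swap_apply_of_ne_of_ne hik hij]
  exact hτ <| (convex_convexHull ℝ _).segment_subset hswap
    (comp_perm_mem_permutahedron hswap s) hseg

end

/-- For weakly decreasing `x, y ∈ ℝ^p`, the Minkowski sum of the permutahedra
`Π(x)` and `Π(y)` equals the permutahedron `Π(x + y)`. -/
theorem permutahedron_minkowski_sum (p : ℕ) (x y : Fin p → ℝ)
    (hx : Antitone x) (hy : Antitone y) :
    permutahedron x + permutahedron y = permutahedron (x + y) := by
  rw [permutahedron, permutahedron, ← convexHull_add]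
  refine subset_antisymm (convexHull_min ?_ (convex_convexHull ℝ _)) (convexHull_mono ?_)
  · rintro _ ⟨_, ⟨σ, rfl⟩, _, ⟨τ, rfl⟩, rfl⟩
    simpa [Function.comp_def, Pi.add_def] using
      comp_perm_mem_permutahedron (add_comp_perm_mem_permutahedron hx hy (τ * σ.symm)) σ
  · rintro _ ⟨σ, rfl⟩
    exact ⟨x ∘ σ, ⟨σ, rfl⟩, y ∘ σ, ⟨σ, rfl⟩, rfl⟩
end

section
/- For any v ∈ ℝ^p, the image of the Birkhoff polytope under the linear map A ↦ A·v equals the permutahedron Π(v); that is, {A·v : A ∈ B^p} = ConvexHull{v_π : π ∈ S_p}. -/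
/-- The Birkhoff polytope: the set of `p × p` doubly stochastic matrices. -/
def birkhoff (p : ℕ) : Set (Matrix (Fin p) (Fin p) ℝ) :=
  {A | (∀ i j, 0 ≤ A i j) ∧ (∀ j, ∑ i, A i j = 1) ∧ (∀ i, ∑ j, A i j = 1)}

lemma birkhoff_eq (p : ℕ) :
    birkhoff p = (doublyStochastic ℝ (Fin p) : Set (Matrix (Fin p) (Fin p) ℝ)) := by
  ext A
  simp [birkhoff, mem_doublyStochastic_iff_sum]
  tauto

lemma permMatrix_mulVec {p : ℕ} (σ : Equiv.Perm (Fin p)) (v : Fin p → ℝ) :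
    (σ.permMatrix ℝ).mulVec v = v ∘ σ := by
  funext i
  simp [Matrix.mulVec, dotProduct, Equiv.Perm.permMatrix,
    PEquiv.toMatrix_apply, Equiv.toPEquiv_apply, Option.mem_def]

/-- The image of the Birkhoff polytope under `A ↦ A·v` equals the
permutahedron `Π(v)`. -/
theorem birkhoff_image_eq_permutahedron (p : ℕ) (v : Fin p → ℝ) :
    {x | ∃ A ∈ birkhoff p, x = A.mulVec v}
      = convexHull ℝ {w | ∃ σ : Equiv.Perm (Fin p), w = v ∘ σ} := by
  have hset : {x | ∃ A ∈ birkhoff p, x = A.mulVec v}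
      = (fun A : Matrix (Fin p) (Fin p) ℝ => A.mulVec v) ''
        (doublyStochastic ℝ (Fin p) : Set (Matrix (Fin p) (Fin p) ℝ)) := by
    rw [← birkhoff_eq]
    ext x
    simp [Set.mem_image, eq_comm]
  let f : Matrix (Fin p) (Fin p) ℝ →ₗ[ℝ] (Fin p → ℝ) :=
    { toFun := fun A => A.mulVec v
      map_add' := fun A B => Matrix.add_mulVec A B v
      map_smul' := fun c A => Matrix.smul_mulVec c A v }
  have : (fun A : Matrix (Fin p) (Fin p) ℝ => A.mulVec v) = f := rfl
  rw [hset, this, doublyStochastic_eq_convexHull_permMatrix,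
    f.image_convexHull]
  congr 1
  ext w
  constructor
  · rintro ⟨M, ⟨σ, rfl⟩, rfl⟩
    exact ⟨σ, permMatrix_mulVec σ v⟩
  · rintro ⟨σ, rfl⟩
    exact ⟨σ.permMatrix ℝ, ⟨σ, rfl⟩, permMatrix_mulVec σ v⟩
end

section
/- If x, y ∈ ℝ^p are weakly decreasing vectors with ∑ x_i = ∑ y_i, then Π(x) ⊆ Π(y) if and only if the partial sums satisfy ∑_{i≤k} x_i ≤ ∑_{i≤k} y_i for all k = 1,...,p (i.e., x is majorized by y). -/
open Finset

theorem mem_convexHull_iff_forall_exists_dotProduct_le {ι : Type*} [Fintype ι]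
    {S : Set (ι → ℝ)} (hS : S.Finite) {z : ι → ℝ} :
    z ∈ convexHull ℝ S ↔ ∀ v, ∃ s ∈ S, z ⬝ᵥ v ≤ s ⬝ᵥ v := by
  constructor
  · intro hz v
    by_contra! h
    have hlin : IsLinearMap ℝ fun w : ι → ℝ => w ⬝ᵥ v :=
      ⟨fun a b => add_dotProduct a b v, fun c a => smul_dotProduct c a v⟩
    have hzz : z ⬝ᵥ v < z ⬝ᵥ v := convexHull_min h (convex_halfSpace_lt hlin _) hz
    exact lt_irrefl _ hzz
  · intro h
    by_contra hz
    obtain ⟨f, c, hf, hc⟩ := geometric_hahn_banach_closed_point (convex_convexHull ℝ S)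
      (hS.isClosed_convexHull ℝ) hz
    classical
    have hfv : ∀ w, f w = w ⬝ᵥ fun i => f fun j => if i = j then 1 else 0 := fun w => by
      simpa [dotProduct] using f.toLinearMap.pi_apply_eq_sum_univ w
    obtain ⟨s, hs, hzs⟩ := h fun i => f fun j => if i = j then 1 else 0
    have hfs := hf s (subset_convexHull ℝ S hs)
    rw [hfv] at hfs hc
    linarith

theorem mem_permutahedron_iff {p : ℕ} {y z : Fin p → ℝ} :
    z ∈ permutahedron y ↔ ∀ v, ∃ σ : Equiv.Perm (Fin p), z ⬝ᵥ v ≤ (y ∘ σ) ⬝ᵥ v := by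
  have hfin : {w | ∃ σ : Equiv.Perm (Fin p), w = y ∘ σ}.Finite :=
    (Set.finite_range fun σ : Equiv.Perm (Fin p) => y ∘ σ).subset fun _ ⟨σ, hσ⟩ => ⟨σ, hσ.symm⟩
  simp [permutahedron, mem_convexHull_iff_forall_exists_dotProduct_le hfin]

theorem mem_permutahedron_self {p : ℕ} (x : Fin p → ℝ) : x ∈ permutahedron x :=
  subset_convexHull ℝ _ ⟨1, rfl⟩

theorem Antitone.dotProduct_comp_perm_le {ι : Type*} [LinearOrder ι] [Fintype ι]
    {x v : ι → ℝ} (hx : Antitone x) (hv : Antitone v) (σ : Equiv.Perm ι) :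
    (x ∘ σ) ⬝ᵥ v ≤ x ⬝ᵥ v :=
  (hx.monovary hv).sum_comp_perm_mul_le_sum_mul

theorem exists_perm_antitone_comp {α : Type*} [LinearOrder α] {n : ℕ} (v : Fin n → α) :
    ∃ σ : Equiv.Perm (Fin n), Antitone (v ∘ σ) :=
  ⟨Tuple.sort (OrderDual.toDual ∘ v), monotone_toDual_comp_iff.1 (Tuple.monotone_sort _)⟩

theorem sum_filter_val_lt_le_of_mem_permutahedron {p : ℕ} {y z : Fin p → ℝ} (hy : Antitone y)
    (hz : z ∈ permutahedron y) (k : ℕ) :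
    ∑ i ∈ univ.filter (fun i : Fin p => (i : ℕ) < k), z i
      ≤ ∑ i ∈ univ.filter (fun i : Fin p => (i : ℕ) < k), y i := by
  set e : Fin p → ℝ := fun i => if (i : ℕ) < k then 1 else 0
  have he : Antitone e := fun i j (hij : (i : ℕ) ≤ j) => by
    simp only [e]
    split_ifs <;> first | (exfalso; omega) | norm_num
  have hdot : ∀ w, w ⬝ᵥ e = ∑ i ∈ univ.filter (fun i : Fin p => (i : ℕ) < k), w i :=
    fun w => by simp [e, dotProduct, sum_filter]
  obtain ⟨σ, hσ⟩ := mem_permutahedron_iff.1 hz e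
  rw [← hdot, ← hdot]
  exact hσ.trans (hy.dotProduct_comp_perm_le he σ)

theorem sum_filter_val_lt_castSucc {M : Type*} [AddCommMonoid M] {p k : ℕ} (hk : k ≤ p)
    (a : Fin (p + 1) → M) :
    ∑ i ∈ univ.filter (fun i : Fin (p + 1) => (i : ℕ) < k), a i
      = ∑ i ∈ univ.filter (fun i : Fin p => (i : ℕ) < k), a i.castSucc := by
  simp [sum_filter, Fin.sum_univ_castSucc, hk.not_gt]

theorem dotProduct_nonneg_of_prefix_sums_nonneg {p : ℕ} {a v : Fin p → ℝ}
    (ha : ∀ k ≤ p, 0 ≤ ∑ i ∈ univ.filter (fun i : Fin p => (i : ℕ) < k), a i)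
    (hv : Antitone v) (hv₀ : 0 ≤ v) : 0 ≤ a ⬝ᵥ v := by
  induction p with
  | zero => simp
  | succ p ih =>
    have hsplit : a ⬝ᵥ v = (a ∘ Fin.castSucc) ⬝ᵥ (fun i => v i.castSucc - v (Fin.last p))
        + v (Fin.last p) * ∑ i, a i := by
      simp only [dotProduct, Fin.sum_univ_castSucc, Function.comp, mul_sub, sum_sub_distrib,
        ← sum_mul]
      ring
    have hfront : 0 ≤ (a ∘ Fin.castSucc) ⬝ᵥ (fun i => v i.castSucc - v (Fin.last p)) := by
      refine ih (fun k hk => ?_) (fun i j hij => ?_) (fun i => ?_)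
      · simpa [sum_filter_val_lt_castSucc hk] using ha k (by omega)
      · simpa using hv (Fin.castSucc_le_castSucc_iff.mpr hij)
      · simpa using hv (Fin.le_last i.castSucc)
    have htotal : 0 ≤ ∑ i, a i := by simpa [Fin.is_le] using ha (p + 1) le_rfl
    rw [hsplit]
    exact add_nonneg hfront (mul_nonneg (hv₀ _) htotal)

theorem dotProduct_le_of_prefix_sums_le {p : ℕ} {x y v : Fin p → ℝ}
    (hpre : ∀ k ≤ p, ∑ i ∈ univ.filter (fun i : Fin p => (i : ℕ) < k), x i
      ≤ ∑ i ∈ univ.filter (fun i : Fin p => (i : ℕ) < k), y i)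
    (hsum : ∑ i, x i = ∑ i, y i) (hv : Antitone v) : x ⬝ᵥ v ≤ y ⬝ᵥ v := by
  cases p with
  | zero => simp
  | succ n =>
    set c := v (Fin.last n)
    have hnonneg : 0 ≤ (y - x) ⬝ᵥ (v - fun _ => c) := by
      refine dotProduct_nonneg_of_prefix_sums_nonneg (fun k hk => ?_) (fun i j hij => ?_)
        (fun i => ?_)
      · simpa [sum_sub_distrib] using hpre k hk
      · simpa using hv hij
      · simpa using hv (Fin.le_last i)
    have hshift : (y - x) ⬝ᵥ (v - fun _ => c) = y ⬝ᵥ v - x ⬝ᵥ v := by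
      simp only [dotProduct, Pi.sub_apply, sub_mul, mul_sub, sum_sub_distrib, ← sum_mul, hsum]
      ring
    linarith

/-- For weakly decreasing `x, y` with equal total sum, `Π(x) ⊆ Π(y)` iff the
partial sums satisfy `∑_{i<k} x i ≤ ∑_{i<k} y i` for every `k`
(i.e. `x` is majorized by `y`). -/
theorem permutahedron_subset_iff_majorized (p : ℕ) (x y : Fin p → ℝ)
    (hx : Antitone x) (hy : Antitone y) (hsum : ∑ i, x i = ∑ i, y i) :
    permutahedron x ⊆ permutahedron y ↔
      ∀ k : ℕ, k ≤ p →
        ∑ i ∈ Finset.univ.filter (fun i : Fin p => (i : ℕ) < k), x i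
          ≤ ∑ i ∈ Finset.univ.filter (fun i : Fin p => (i : ℕ) < k), y i := by
  constructor
  · exact fun hsub k _ =>
      sum_filter_val_lt_le_of_mem_permutahedron hy (hsub (mem_permutahedron_self x)) k
  · intro hpre
    refine convexHull_min ?_ (convex_convexHull ℝ _)
    rintro _ ⟨σ, rfl⟩
    refine mem_permutahedron_iff.2 fun v => ?_
    obtain ⟨τ, hτ⟩ := exists_perm_antitone_comp v
    refine ⟨τ.symm, ?_⟩
    calc (x ∘ σ) ⬝ᵥ v = (x ∘ (σ * τ)) ⬝ᵥ (v ∘ τ) :=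
          (comp_equiv_dotProduct_comp_equiv _ _ τ).symm
      _ ≤ x ⬝ᵥ (v ∘ τ) := hx.dotProduct_comp_perm_le hτ _
      _ ≤ y ⬝ᵥ (v ∘ τ) := dotProduct_le_of_prefix_sums_le hpre hsum hτ
      _ = (y ∘ τ.symm) ⬝ᵥ v := (comp_equiv_symm_dotProduct y v τ).symm
end

section
/- Let ν̂^{a,d} ∈ ℝ^n denote, for each pair (a,d) with 1 ≤ a < d ≤ n+1, a fixed vector supported on coordinates a,...,d−1, and for π ∈ S_n let ν̂^{a,d}_π denote the vector obtained by permuting the nonzero entries of ν̂^{a,d} within its support according to the order ranking of π on coordinates a,...,d−1. Then the Minkowski sum ⊎_{a,d} Π̂(ν^{a,d}) of the embedded permutahedra equals the convex hull of the points μ_π = ∑_{a,d} ν̂^{a,d}_π over all π ∈ S_n. -/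
/-- Embed a vector `w : Fin p → ℝ` into `ℝ^n` on the window of coordinates
`a, ..., a + p - 1`, padding with zeros elsewhere. -/
def embed (n a p : ℕ) (_h : a + p ≤ n) (w : Fin p → ℝ) : Fin n → ℝ :=
  fun t => if ht : a ≤ (t : ℕ) ∧ (t : ℕ) < a + p then w ⟨(t : ℕ) - a, by omega⟩ else 0

/-- The embedded permutahedron: the convex hull of the embeddings of all
coordinate permutations of `v` into the window `a, ..., a + p - 1`. -/
def embPermutahedron (n a p : ℕ) (h : a + p ≤ n) (v : Fin p → ℝ) :
    Set (Fin n → ℝ) :=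
  convexHull ℝ {e | ∃ σ : Equiv.Perm (Fin p), e = embed n a p h (v ∘ σ)}

/-- The order ranking of `π ∈ S_n` on the window `a, ..., a + p - 1`: the rank
(number of strictly smaller values) of `π (a + i)` among the `π (a + j)`. -/
def orderRank (n : ℕ) (π : Equiv.Perm (Fin n)) (a p : ℕ) (h : a + p ≤ n)
    (i : Fin p) : Fin p := by
  refine ⟨(Finset.univ.filter (fun j : Fin p =>
      π ⟨a + (j : ℕ), by omega⟩ < π ⟨a + (i : ℕ), by omega⟩)).card, ?_⟩
  refine lt_of_lt_of_le
    (Finset.card_lt_card (Finset.filter_ssubset.mpr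
      ⟨i, Finset.mem_univ i, lt_irrefl _⟩)) ?_
  simp

/-- The vector `ν̂_π`: the embedding of `ν` permuted within its window according
to the order ranking of `π` on that window. -/
def embRank (n : ℕ) (π : Equiv.Perm (Fin n)) (a p : ℕ) (h : a + p ≤ n)
    (ν : Fin p → ℝ) : Fin n → ℝ :=
  embed n a p h (fun i => ν (orderRank n π a p h i))
open Finset Pointwise

/-!
The left side is `conv (∑ᵢ Sᵢ)`, where `Sᵢ` is the vertex set of the `i`-th embedded
permutahedron, since convex hulls commute with Minkowski sums; each `μ_π` lies in `∑ᵢ Sᵢ`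
because the order ranking is a permutation, which gives `⊇`. For `⊆` it suffices, by
Hahn–Banach, that every linear functional `x ↦ ∑ₜ cₜ xₜ` attains its maximum over `∑ᵢ Sᵢ` at
some `μ_π`. Take `π` listing the coordinates in decreasing order of `c`: on every window the
order ranking of `π` then pairs larger entries of the antitone `νᵢ` with larger coefficients
of `c`, so by the rearrangement inequality each summand is maximized simultaneously.
-/

section ConvexHull

variable {E : Type*} [TopologicalSpace E] [AddCommGroup E] [Module ℝ E]
  [IsTopologicalAddGroup E] [ContinuousSMul ℝ E] [LocallyConvexSpace ℝ E] [T2Space E]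

theorem mem_convexHull_of_forall_exists_le {s : Set E} (hs : s.Finite) {x : E}
    (hx : ∀ f : StrongDual ℝ E, ∃ y ∈ s, f x ≤ f y) : x ∈ convexHull ℝ s := by
  by_contra hxs
  obtain ⟨f, u, hfs, hfx⟩ :=
    geometric_hahn_banach_closed_point (convex_convexHull ℝ s)
      (hs.isClosed_convexHull (𝕜 := ℝ)) hxs
  obtain ⟨y, hy, hxy⟩ := hx f
  linarith [hfs y (subset_convexHull ℝ s hy)]

end ConvexHull

theorem LinearMap.apply_eq_sum_mul {R ι : Type*} [CommSemiring R] [Fintype ι] [DecidableEq ι]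
    (f : (ι → R) →ₗ[R] R) (x : ι → R) : f x = ∑ t, f (Pi.single t 1) * x t := by
  conv_lhs => rw [← Finset.univ_sum_single x]
  simp only [map_sum]
  refine Finset.sum_congr rfl fun t _ => ?_
  have hsingle : Pi.single t (x t) = x t • Pi.single t (1 : R) := by
    rw [← Pi.single_smul', smul_eq_mul, mul_one]
  rw [hsingle, map_smul, smul_eq_mul, mul_comm]

theorem Fin.exists_perm_antitone_comp_symm {α : Type*} [LinearOrder α] {n : ℕ} (c : Fin n → α) :
    ∃ π : Equiv.Perm (Fin n), Antitone (c ∘ π.symm) :=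
  ⟨(Tuple.sort (OrderDual.toDual ∘ c)).symm, Tuple.monotone_sort (OrderDual.toDual ∘ c)⟩

section Rank

variable {α : Type*} [LinearOrder α] {p : ℕ} {F : Fin p → α} {i j : Fin p}

def valueRank (F : Fin p → α) (i : Fin p) : ℕ := #{j | F j < F i}

theorem valueRank_lt_valueRank (hij : F i < F j) : valueRank F i < valueRank F j := by
  refine Finset.card_lt_card (Finset.ssubset_iff_of_subset ?_ |>.2 ⟨i, by simp [hij], by simp⟩)
  intro k hk
  simp only [Finset.mem_filter, Finset.mem_univ, true_and] at hk ⊢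
  exact hk.trans hij

theorem valueRank_lt_valueRank_iff (hF : Function.Injective F) :
    valueRank F i < valueRank F j ↔ F i < F j := by
  refine ⟨fun hr => ?_, valueRank_lt_valueRank⟩
  rcases lt_trichotomy (F i) (F j) with hlt | heq | hgt
  · exact hlt
  · exact absurd (hF heq ▸ hr) (lt_irrefl _)
  · exact absurd (valueRank_lt_valueRank hgt) hr.not_gt

theorem valueRank_injective (hF : Function.Injective F) : Function.Injective (valueRank F) := by
  intro i j hij
  by_contra hne
  rcases (hF.ne hne).lt_or_gt with hlt | hgt
  · exact (valueRank_lt_valueRank hlt).ne hij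
  · exact (valueRank_lt_valueRank hgt).ne' hij

end Rank

section Window

variable {n a p : ℕ} (h : a + p ≤ n)

def windowPos (j : Fin p) : Fin n := ⟨a + j, by omega⟩

theorem windowPos_injective : Function.Injective (windowPos h) := by
  intro i j hij
  have := congrArg Fin.val hij
  simp only [windowPos] at this
  exact Fin.ext (by omega)

theorem embed_windowPos (w : Fin p → ℝ) (j : Fin p) : embed n a p h w (windowPos h j) = w j := by
  simp [embed, windowPos]

theorem embed_eq_zero_of_notMem_range (w : Fin p → ℝ) {t : Fin n}
    (ht : t ∉ Set.range (windowPos h)) : embed n a p h w t = 0 := by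
  refine dif_neg fun hwin => ht ⟨⟨t - a, by omega⟩, Fin.ext ?_⟩
  simp only [windowPos]
  omega

theorem sum_mul_embed (c : Fin n → ℝ) (w : Fin p → ℝ) :
    ∑ t, c t * embed n a p h w t = ∑ j, c (windowPos h j) * w j :=
  (Fintype.sum_of_injective _ (windowPos_injective h) _ _
    (fun t ht => by rw [embed_eq_zero_of_notMem_range h w ht, mul_zero])
    (fun j => by rw [embed_windowPos])).symm

theorem orderRank_val (π : Equiv.Perm (Fin n)) (i : Fin p) :
    (orderRank n π a p h i : ℕ) = valueRank (π ∘ windowPos h) i := rfl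

theorem orderRank_lt_orderRank_iff (π : Equiv.Perm (Fin n)) {i j : Fin p} :
    orderRank n π a p h i < orderRank n π a p h j ↔ π (windowPos h i) < π (windowPos h j) := by
  rw [Fin.lt_def, orderRank_val, orderRank_val,
    valueRank_lt_valueRank_iff (π.injective.comp (windowPos_injective h))]
  rfl

theorem orderRank_bijective (π : Equiv.Perm (Fin n)) : Function.Bijective (orderRank n π a p h) :=
  Finite.injective_iff_bijective.1 fun _ _ hij =>
    valueRank_injective (π.injective.comp (windowPos_injective h)) (congrArg Fin.val hij)

noncomputable def orderRankPerm (π : Equiv.Perm (Fin n)) : Equiv.Perm (Fin p) :=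
  Equiv.ofBijective _ (orderRank_bijective h π)

@[simp]
theorem orderRankPerm_apply (π : Equiv.Perm (Fin n)) (i : Fin p) :
    orderRankPerm h π i = orderRank n π a p h i := rfl

end Window

section Rearrangement

variable {n a p : ℕ} (h : a + p ≤ n) {π : Equiv.Perm (Fin n)} {c : Fin n → ℝ} {ν : Fin p → ℝ}

theorem monovary_comp_windowPos_orderRankPerm (hπ : Antitone (c ∘ π.symm)) (hν : Antitone ν) :
    Monovary (c ∘ windowPos h) (ν ∘ orderRankPerm h π) := by
  intro i j hij
  have hji : π (windowPos h j) < π (windowPos h i) :=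
    (orderRank_lt_orderRank_iff h π).1 (hν.reflect_lt hij)
  simpa using hπ hji.le

theorem sum_mul_embed_le_sum_mul_embRank (hπ : Antitone (c ∘ π.symm)) (hν : Antitone ν)
    (σ : Equiv.Perm (Fin p)) :
    ∑ t, c t * embed n a p h (ν ∘ σ) t ≤ ∑ t, c t * embRank n π a p h ν t := by
  rw [embRank, sum_mul_embed, sum_mul_embed]
  simpa only [Function.comp_apply, Equiv.trans_apply, Equiv.apply_symm_apply,
    orderRankPerm_apply] using
    (monovary_comp_windowPos_orderRankPerm h hπ hν).sum_mul_comp_perm_le_sum_mul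
      (σ := σ.trans (orderRankPerm h π).symm)

theorem exists_perm_embRank_eq_embed (π : Equiv.Perm (Fin n)) (ν : Fin p → ℝ) :
    ∃ σ : Equiv.Perm (Fin p), embRank n π a p h ν = embed n a p h (ν ∘ σ) :=
  ⟨orderRankPerm h π, rfl⟩

end Rearrangement

theorem minkowski_sum_embedded_permutahedra_general (n : ℕ) (ι : Type*) [Fintype ι]
    (a p : ι → ℕ) (h : ∀ i, a i + p i ≤ n)
    (ν : ∀ i, Fin (p i) → ℝ) (hν : ∀ i, Antitone (ν i)) :
    {x : Fin n → ℝ | ∃ u : ι → Fin n → ℝ,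
        (∀ i, u i ∈ embPermutahedron n (a i) (p i) (h i) (ν i)) ∧ x = ∑ i, u i}
      = convexHull ℝ {μ | ∃ π : Equiv.Perm (Fin n),
          μ = ∑ i, embRank n π (a i) (p i) (h i) (ν i)} := by
  classical
  set S : ι → Set (Fin n → ℝ) := fun i =>
    {e | ∃ σ : Equiv.Perm (Fin (p i)), e = embed n (a i) (p i) (h i) (ν i ∘ σ)}
  set M : Set (Fin n → ℝ) := {μ | ∃ π : Equiv.Perm (Fin n),
    μ = ∑ i, embRank n π (a i) (p i) (h i) (ν i)}
  have hM : M.Finite := (Set.finite_range _).subset fun _ ⟨π, hπ⟩ => ⟨π, hπ.symm⟩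
  suffices convexHull ℝ (∑ i, S i) = convexHull ℝ M by
    rw [← this, convexHull_sum]
    ext x
    simp only [Set.mem_fintype_sum, Set.mem_ofPred_eq, embPermutahedron, S, exists_prop,
      eq_comm]
  refine (convexHull_min ?_ (convex_convexHull ℝ M)).antisymm (convexHull_mono ?_)
  · intro x hx
    obtain ⟨u, hu, rfl⟩ := (Set.mem_fintype_sum _ _).1 hx
    choose σ hσ using hu
    refine mem_convexHull_of_forall_exists_le hM fun f => ?_
    obtain ⟨π, hπ⟩ := Fin.exists_perm_antitone_comp_symm fun t => f (Pi.single t 1)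
    refine ⟨_, ⟨π, rfl⟩, ?_⟩
    have hf : ∀ y, f y = ∑ t, f (Pi.single t 1) * y t := f.toLinearMap.apply_eq_sum_mul
    simp only [map_sum]
    gcongr with i
    rw [hσ i, hf, hf]
    exact sum_mul_embed_le_sum_mul_embRank (h i) hπ (hν i) (σ i)
  · rintro _ ⟨π, rfl⟩
    exact (Set.mem_fintype_sum _ _).2
      ⟨_, fun i => exists_perm_embRank_eq_embed (h i) π (ν i), rfl⟩

/-- The Minkowski sum of the embedded permutahedra `Π̂(ν^{a,d})` equals the
convex hull of the points `μ_π = ∑_{a,d} ν̂^{a,d}_π` over all `π ∈ S_n`. -/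
theorem minkowski_sum_embedded_permutahedra (n : ℕ) (ι : Type*) [Fintype ι]
    (a p : ι → ℕ) (hp : ∀ i, 0 < p i) (h : ∀ i, a i + p i ≤ n)
    (ν : ∀ i, Fin (p i) → ℝ) (hν : ∀ i, Antitone (ν i)) :
    {x : Fin n → ℝ | ∃ u : ι → Fin n → ℝ,
        (∀ i, u i ∈ embPermutahedron n (a i) (p i) (h i) (ν i)) ∧ x = ∑ i, u i}
      = convexHull ℝ {μ | ∃ π : Equiv.Perm (Fin n),
          μ = ∑ i, embRank n π (a i) (p i) (h i) (ν i)} :=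
  minkowski_sum_embedded_permutahedra_general n ι a p h ν hν
end
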